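/- Let β > 0 and define q(x,t) = 1 + 6/(1 - 2cosh(2√3(x - 18t) + log(3/β))). Since cosh ≥ 1, the denominator satisfies 1 - 2cosh(2√3(x - 18t) + log(3/β)) ≤ -1 < 0 everywhere. Then q is a globally smooth classical solution on ℝ² of the focusing mKdV equation q_t + q_{xxx} + 6 q² q_x = 0. Moreover q(x,t) → 1 as |x| → ∞ for each fixed t. -/

import Mathlib

open Filter

/-- Partial derivative in the first (space) variable. -/
noncomputable def pdx (f : ℝ → ℝ → ℝ) : ℝ → ℝ → ℝ := fun x t => deriv (fun y => f y t) x

/-- Partial derivative in the second (time) variable. -/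
noncomputable def pdt (f : ℝ → ℝ → ℝ) : ℝ → ℝ → ℝ := fun x t => deriv (fun s => f x s) t

section Aux

noncomputable def solGD (u : ℝ) : ℝ := 1 - 2 * Real.cosh u
noncomputable def solG0 (u : ℝ) : ℝ := 1 + 6 / solGD u
noncomputable def solG1 (u : ℝ) : ℝ := 12 * Real.sinh u / (solGD u)^2
noncomputable def solG2 (u : ℝ) : ℝ :=
  (12 * Real.cosh u * solGD u + 48 * (Real.sinh u)^2) / (solGD u)^3
noncomputable def solG3 (u : ℝ) : ℝ :=
  (12 * Real.sinh u * (solGD u)^2 + 144 * Real.sinh u * Real.cosh u * solGD u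
    + 288 * (Real.sinh u)^3) / (solGD u)^4

lemma solGD_le (u : ℝ) : solGD u ≤ -1 := by
  have := Real.one_le_cosh u; unfold solGD; linarith

lemma solGD_ne (u : ℝ) : solGD u ≠ 0 := by have := solGD_le u; intro h; rw [h] at this; linarith

lemma hasDerivAt_solGD (u : ℝ) : HasDerivAt solGD (-2 * Real.sinh u) u := by
  exact (((Real.hasDerivAt_cosh u).const_mul 2).const_sub 1).congr_deriv (by ring)

lemma hasDerivAt_solG0 (u : ℝ) : HasDerivAt solG0 (solG1 u) u := by
  have h := ((hasDerivAt_const u (6:ℝ)).div (hasDerivAt_solGD u) (solGD_ne u)).const_add 1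
  refine h.congr_deriv ?_
  have := solGD_ne u
  unfold solG1
  field_simp
  ring

lemma hasDerivAt_solG1 (u : ℝ) : HasDerivAt solG1 (solG2 u) u := by
  have hnum : HasDerivAt (fun u => 12 * Real.sinh u) (12 * Real.cosh u) u :=
    (Real.hasDerivAt_sinh u).const_mul 12
  have hden : HasDerivAt (fun u => (solGD u)^2) (2 * solGD u * (-2 * Real.sinh u)) u := by
    exact ((hasDerivAt_solGD u).pow 2).congr_deriv (by norm_num)
  have h := hnum.div hden (pow_ne_zero 2 (solGD_ne u))
  refine h.congr_deriv ?_
  have := solGD_ne u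
  unfold solG2
  field_simp
  ring

lemma hasDerivAt_solG2 (u : ℝ) : HasDerivAt solG2 (solG3 u) u := by
  have hnum : HasDerivAt (fun u => 12 * Real.cosh u * solGD u + 48 * (Real.sinh u)^2)
      (12 * Real.sinh u * solGD u + 12 * Real.cosh u * (-2 * Real.sinh u)
        + 48 * (2 * Real.sinh u * Real.cosh u)) u := by
    have h1 := (((Real.hasDerivAt_cosh u).const_mul 12).mul (hasDerivAt_solGD u))
    have h2 := (((Real.hasDerivAt_sinh u).pow 2).const_mul 48)
    refine (h1.add h2).congr_deriv ?_
    ring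
  have hden : HasDerivAt (fun u => (solGD u)^3) (3 * (solGD u)^2 * (-2 * Real.sinh u)) u := by
    exact ((hasDerivAt_solGD u).pow 3).congr_deriv (by norm_num)
  have h := hnum.div hden (pow_ne_zero 3 (solGD_ne u))
  refine h.congr_deriv ?_
  have := solGD_ne u
  unfold solG3
  field_simp
  ring

lemma sol_key_identity (u : ℝ) :
    -18 * solG1 u + 12 * solG3 u + 6 * (solG0 u)^2 * solG1 u = 0 := by
  have hs : Real.sinh u ^ 2 = Real.cosh u ^ 2 - 1 := Real.sinh_sq u
  have hne := solGD_ne u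
  unfold solG0 solG1 solG3 solGD at *
  field_simp
  ring_nf
  linear_combination (3456 * Real.sinh u) * hs

lemma sol_cosh_atTop : Tendsto Real.cosh atTop atTop := by
  apply tendsto_atTop_mono (fun u => ?_) (Real.tendsto_exp_atTop.atTop_div_const two_pos)
  rw [Real.cosh_eq]
  have := (Real.exp_pos (-u)).le
  linarith

lemma sol_cosh_atBot : Tendsto Real.cosh atBot atTop := by
  have : Real.cosh = Real.cosh ∘ Neg.neg := by funext u; simp [Real.cosh_neg]
  rw [this]
  exact sol_cosh_atTop.comp tendsto_neg_atBot_atTop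

end Aux

/-- for `β > 0`,
`q(x,t) = 1 + 6/(1 - 2cosh(2√3(x-18t) + log(3/β)))` has nonvanishing
denominator (indeed `≤ -1`), is globally smooth, solves the focusing mKdV
equation `q_t + q_xxx + 6q²q_x = 0` on all of `ℝ²`, and tends to `1` as
`|x| → ∞` for each fixed `t`. -/
theorem one_soliton_solves_mkdv (β : ℝ) (hβ : 0 < β) :
    let q : ℝ → ℝ → ℝ := fun x t =>
      1 + 6 / (1 - 2 * Real.cosh (2 * Real.sqrt 3 * (x - 18 * t) + Real.log (3 / β)))
    (∀ x t : ℝ,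
      1 - 2 * Real.cosh (2 * Real.sqrt 3 * (x - 18 * t) + Real.log (3 / β)) ≤ -1) ∧
    ContDiff ℝ (⊤ : ℕ∞) (fun z : ℝ × ℝ => q z.1 z.2) ∧
    (∀ x t : ℝ,
      pdt q x t + pdx (pdx (pdx q)) x t + 6 * (q x t) ^ 2 * pdx q x t = 0) ∧
    (∀ t : ℝ, Tendsto (fun x => q x t) atTop (nhds 1) ∧
      Tendsto (fun x => q x t) atBot (nhds 1)) := by
  intro q
  set c : ℝ := 2 * Real.sqrt 3 with hc
  set L : ℝ := Real.log (3 / β) with hL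
  have hcpos : 0 < c := by positivity
  have hc2 : c ^ 2 = 12 := by
    rw [hc, mul_pow, Real.sq_sqrt (by norm_num : (0:ℝ) ≤ 3)]; norm_num
  set a : ℝ → ℝ → ℝ := fun x t => c * (x - 18 * t) + L with ha
  have hq : ∀ x t, q x t = solG0 (a x t) := fun x t => rfl
  -- derivative of inner function in x
  have hax : ∀ x t : ℝ, HasDerivAt (fun y => a y t) c x := by
    intro x t
    exact (((hasDerivAt_id x).sub_const (18*t)).const_mul c).add_const L |>.congr_deriv (by simp)
  have hat : ∀ x t : ℝ, HasDerivAt (fun s => a x s) (c * (-18)) t := by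
    intro x t
    have h1 : HasDerivAt (fun s : ℝ => x - 18 * s) (-18) t := by
      simpa using ((hasDerivAt_id t).const_mul 18).const_sub x
    exact (h1.const_mul c).add_const L
  -- first space derivative
  have hpdx : pdx q = fun x t => solG1 (a x t) * c := by
    funext x t
    exact ((hasDerivAt_solG0 (a x t)).comp x (hax x t)).deriv
  have hpdx2 : pdx (pdx q) = fun x t => solG2 (a x t) * c * c := by
    funext x t
    rw [hpdx]
    exact (((hasDerivAt_solG1 (a x t)).comp x (hax x t)).mul_const c).deriv
  have hpdx3 : pdx (pdx (pdx q)) = fun x t => solG3 (a x t) * c * c * c := by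
    funext x t
    rw [hpdx2]
    exact ((((hasDerivAt_solG2 (a x t)).comp x (hax x t)).mul_const c).mul_const c).deriv
  have hpdt : pdt q = fun x t => solG1 (a x t) * (c * (-18)) := by
    funext x t
    exact ((hasDerivAt_solG0 (a x t)).comp t (hat x t)).deriv
  refine ⟨fun x t => solGD_le (a x t), ?_, ?_, ?_⟩
  · -- smoothness
    have hin : ContDiff ℝ (⊤ : ℕ∞) (fun z : ℝ × ℝ => 1 - 2 * Real.cosh (c * (z.1 - 18 * z.2) + L)) := by
      apply ContDiff.sub contDiff_const
      apply ContDiff.mul contDiff_const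
      exact Real.contDiff_cosh.comp
        (((contDiff_const.mul (contDiff_fst.sub (contDiff_const.mul contDiff_snd))).add
          contDiff_const))
    exact contDiff_const.add (contDiff_const.div hin fun z => solGD_ne _)
  · -- PDE
    intro x t
    rw [hpdx3, hpdt, hpdx, hq]
    simp only
    have hkey := sol_key_identity (a x t)
    linear_combination c * hkey + (solG3 (a x t) * c) * hc2
  · -- limits
    intro t
    have hlim : ∀ l : Filter ℝ, Tendsto (fun x => a x t) l atTop →
        Tendsto (fun x => q x t) l (nhds 1) := by
      intro l h
      have hcosh : Tendsto (fun x => Real.cosh (a x t)) l atTop := sol_cosh_atTop.comp h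
      have hden : Tendsto (fun x => -(1 - 2 * Real.cosh (a x t))) l atTop := by
        have h2 : Tendsto (fun x => 2 * Real.cosh (a x t)) l atTop :=
          hcosh.const_mul_atTop two_pos
        simpa [← sub_eq_add_neg] using tendsto_atTop_add_const_right l (-1) h2
      have h0 : Tendsto (fun x => (6:ℝ) / (1 - 2 * Real.cosh (a x t))) l (nhds 0) := by
        refine (hden.const_div_atTop (-6 : ℝ)).congr (fun x => neg_div_neg_eq 6 _)
      have : Tendsto (fun x => 1 + (6:ℝ) / (1 - 2 * Real.cosh (a x t))) l (nhds (1 + 0)) :=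
        tendsto_const_nhds.add h0
      simpa using this
    have hsubT : Tendsto (fun x : ℝ => x - 18 * t) atTop atTop := by
      simpa [sub_eq_add_neg] using tendsto_atTop_add_const_right atTop (-(18*t)) tendsto_id
    have hsubB : Tendsto (fun x : ℝ => x - 18 * t) atBot atBot := by
      simpa [sub_eq_add_neg] using tendsto_atBot_add_const_right atBot (-(18*t)) tendsto_id
    constructor
    · apply hlim
      exact tendsto_atTop_add_const_right atTop L (hsubT.const_mul_atTop hcpos)
    · -- atBot: a x t → atBot, cosh → atTop still
      have h : Tendsto (fun x => a x t) atBot atBot :=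
        tendsto_atBot_add_const_right atBot L (hsubB.const_mul_atBot hcpos)
      have hcosh : Tendsto (fun x => Real.cosh (a x t)) atBot atTop := sol_cosh_atBot.comp h
      have hden : Tendsto (fun x => -(1 - 2 * Real.cosh (a x t))) atBot atTop := by
        have h2 : Tendsto (fun x => 2 * Real.cosh (a x t)) atBot atTop :=
          hcosh.const_mul_atTop two_pos
        simpa [← sub_eq_add_neg] using tendsto_atTop_add_const_right atBot (-1) h2
      have h0 : Tendsto (fun x => (6:ℝ) / (1 - 2 * Real.cosh (a x t))) atBot (nhds 0) := by
        refine (hden.const_div_atTop (-6 : ℝ)).congr (fun x => neg_div_neg_eq 6 _)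
      have : Tendsto (fun x => 1 + (6:ℝ) / (1 - 2 * Real.cosh (a x t))) atBot (nhds (1 + 0)) :=
        tendsto_const_nhds.add h0
      simpa using this
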